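/- Let σ_t > 0, let 0 < σ̃_A < σ̃_B, and let c > 0 satisfy c < (σ_t²/σ̃_B)·(2π)^(−1/2). For i ∈ {A, B} set a_i = σ_t²/σ̃_i and let z_i* be the unique zero of z ↦ a_i·(φ(z) − z·Φᶜ(z)) − c. Then the optimal per-hire utilities satisfy a_A·z_A* > a_B·z_B* > 0; that is, the principal's optimal net expected utility per hired applicant is strictly larger for the group with the less noisy signal. -/

import Mathlib

open MeasureTheory ProbabilityTheory Real

/-- Standard normal density. -/
noncomputable def stdPdf (x : ℝ) : ℝ := (Real.sqrt (2 * Real.pi))⁻¹ * Real.exp (-(x ^ 2) / 2)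

/-- Standard normal CDF. -/
noncomputable def stdCdf (x : ℝ) : ℝ := ∫ u in Set.Iic x, stdPdf u

/-- Standard normal complementary CDF. -/
noncomputable def stdCcdf (x : ℝ) : ℝ := 1 - stdCdf x

/-- Standard normal hazard rate. -/
noncomputable def hazard (x : ℝ) : ℝ := stdPdf x / stdCcdf x

/-! The optimal threshold solves `a · L(z) = c`, where `L(z) = φ(z) − z Φᶜ(z) = E[(Z − z)⁺]` is
strictly decreasing (`L' = −Φᶜ`). A larger `a` therefore gives a smaller `L(z*)`, i.e. a larger
threshold, and `c < a_B L(0)` puts both thresholds above `0`. The per-hire utility is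
`a z* = c · z* / L(z*)`, and `z ↦ z / L(z)` is increasing on `z > 0`. -/

lemma stdPdf_eq_gaussianPDFReal : stdPdf = gaussianPDFReal 0 1 := by
  ext x
  simp [stdPdf, gaussianPDFReal]

lemma continuous_stdPdf : Continuous stdPdf := by
  unfold stdPdf
  fun_prop

lemma integrable_stdPdf : Integrable stdPdf :=
  stdPdf_eq_gaussianPDFReal ▸ integrable_gaussianPDFReal 0 1

lemma stdPdf_pos (x : ℝ) : 0 < stdPdf x := by
  unfold stdPdf
  positivity

lemma stdPdf_zero : stdPdf 0 = (√(2 * π))⁻¹ := by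
  simp [stdPdf]

lemma hasDerivAt_stdPdf (x : ℝ) : HasDerivAt stdPdf (-x * stdPdf x) x := by
  have hexponent : HasDerivAt (fun y : ℝ => -(y ^ 2) / 2) (-x) x :=
    ((hasDerivAt_pow 2 x).neg.div_const 2).congr_deriv (by push_cast; ring)
  exact (hexponent.exp.const_mul (√(2 * π))⁻¹).congr_deriv (by rw [stdPdf]; ring)

lemma stdCcdf_eq_integral_Ioi (x : ℝ) : stdCcdf x = ∫ u in Set.Ioi x, stdPdf u := by
  have htotal : ∫ u, stdPdf u = 1 :=
    stdPdf_eq_gaussianPDFReal ▸ integral_gaussianPDFReal_eq_one 0 one_ne_zero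
  rw [stdCcdf, stdCdf, ← htotal, ← intervalIntegral.integral_Iic_add_Ioi
    integrable_stdPdf.integrableOn integrable_stdPdf.integrableOn]
  ring

lemma stdCcdf_pos (x : ℝ) : 0 < stdCcdf x := by
  rw [stdCcdf_eq_integral_Ioi, setIntegral_pos_iff_support_of_nonneg_ae
    (ae_of_all _ fun y => (stdPdf_pos y).le) integrable_stdPdf.integrableOn]
  have hsupport : Function.support stdPdf = Set.univ :=
    Set.eq_univ_of_forall fun y => (stdPdf_pos y).ne'
  simp [hsupport]

lemma hasDerivAt_stdCdf (x : ℝ) : HasDerivAt stdCdf (stdPdf x) x := by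
  have hshift : stdCdf = fun y => stdCdf 0 + ∫ t in (0 : ℝ)..y, stdPdf t := by
    ext y
    rw [stdCdf, stdCdf, ← intervalIntegral.integral_Iic_sub_Iic
      integrable_stdPdf.integrableOn integrable_stdPdf.integrableOn]
    ring
  rw [hshift]
  exact (intervalIntegral.integral_hasDerivAt_right (continuous_stdPdf.intervalIntegrable _ _)
    (continuous_stdPdf.stronglyMeasurableAtFilter _ _) continuous_stdPdf.continuousAt).const_add _

lemma hasDerivAt_stdCcdf (x : ℝ) : HasDerivAt stdCcdf (-stdPdf x) x :=
  (hasDerivAt_stdCdf x).const_sub 1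

noncomputable def stdLoss (z : ℝ) : ℝ := stdPdf z - z * stdCcdf z

lemma stdLoss_zero : stdLoss 0 = (√(2 * π))⁻¹ := by
  simp [stdLoss, stdPdf_zero]

lemma hasDerivAt_stdLoss (z : ℝ) : HasDerivAt stdLoss (-stdCcdf z) z :=
  ((hasDerivAt_stdPdf z).sub ((hasDerivAt_id' z).mul (hasDerivAt_stdCcdf z))).congr_deriv
    (by ring)

lemma strictAnti_stdLoss : StrictAnti stdLoss :=
  strictAnti_of_deriv_neg fun z => by
    rw [(hasDerivAt_stdLoss z).deriv, neg_lt_zero]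
    exact stdCcdf_pos z

lemma stdLoss_eq_div_of_mul_sub_eq_zero {a c z : ℝ} (ha : a ≠ 0) (h : a * stdLoss z - c = 0) :
    stdLoss z = c / a := by
  rw [eq_div_iff ha]
  linarith

/-- Disparate-variance model: the group with the less noisy signal yields a strictly larger
optimal net expected utility per hired applicant. With `a_i = σ_t²/σ̃_i` and `z_i*` the zero
of `z ↦ a_i·(φ(z) − z·Φᶜ(z)) − c`, if `σ̃_A < σ̃_B` and `c < (σ_t²/σ̃_B)·(2π)^(−1/2)`, then
`a_A·z_A* > a_B·z_B* > 0`. -/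
theorem advantaged_group_better_utility (σt σtA σtB c zA zB : ℝ)
    (hσt : 0 < σt) (hA : 0 < σtA) (hAB : σtA < σtB)
    (hc : 0 < c) (hviable : c < σt ^ 2 / σtB / Real.sqrt (2 * Real.pi))
    (hzA : σt ^ 2 / σtA * (stdPdf zA - zA * stdCcdf zA) - c = 0)
    (hzB : σt ^ 2 / σtB * (stdPdf zB - zB * stdCcdf zB) - c = 0) :
    σt ^ 2 / σtA * zA > σt ^ 2 / σtB * zB ∧ 0 < σt ^ 2 / σtB * zB := by
  set aA := σt ^ 2 / σtA
  set aB := σt ^ 2 / σtB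
  have haB : 0 < aB := div_pos (pow_pos hσt 2) (hA.trans hAB)
  have haAB : aB < aA := div_lt_div_of_pos_left (pow_pos hσt 2) hA hAB
  have haA : 0 < aA := haB.trans haAB
  have hLA : stdLoss zA = c / aA := stdLoss_eq_div_of_mul_sub_eq_zero haA.ne' hzA
  have hLB : stdLoss zB = c / aB := stdLoss_eq_div_of_mul_sub_eq_zero haB.ne' hzB
  have hLAB : stdLoss zA < stdLoss zB := by
    rw [hLA, hLB]
    exact div_lt_div_of_pos_left hc haB haAB
  have hzAB : zB < zA := strictAnti_stdLoss.lt_iff_gt.mp hLAB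
  have hzB_pos : 0 < zB := by
    refine strictAnti_stdLoss.lt_iff_gt.mp ?_
    rw [hLB, stdLoss_zero, div_lt_iff₀ haB, ← div_eq_inv_mul]
    exact hviable
  have hutility : ∀ {a z}, 0 < a → stdLoss z = c / a → a * z = c * (z / stdLoss z) := by
    intro a z ha hL
    rw [hL]
    field_simp
  refine ⟨?_, mul_pos haB hzB_pos⟩
  rw [gt_iff_lt, hutility haB hLB, hutility haA hLA]
  refine mul_lt_mul_of_pos_left (div_lt_div₀ hzAB hLAB.le (hzB_pos.trans hzAB).le ?_) hc
  exact hLA ▸ div_pos hc haA
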